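/- arXiv:2507.05256 — 5 statements merged into one kernel-verified Lean document; each statement's English description precedes it below -/
import Mathlib

section
/- Let E be a real normed vector space, let L, C, Δt ≥ 0 be real numbers and p a natural number. Let n ≥ 1 and let s_m = t_0 ≤ t_1 ≤ … ≤ t_n = s_{m+1} be a partition of [s_m, s_{m+1}]. Let G : ℝ → E → E be such that for every u ∈ ℝ the map G(u, ·) : E → E is Lipschitz with constant L. Let z̃ : {0,…,n} → E and ẑ : {0,…,n−1} → E satisfy, for every i < n: (i) ‖ẑ(i) − z̃(i)‖ ≤ C·(t_{i+1} − t_i)·(Δt)^p (local solver error bound), and (ii) G(t_{i+1}, z̃(i+1)) = G(t_i, ẑ(i)) (self-consistency along the sub-trajectory). Suppose moreover the boundary condition G(t_0, z̃(0)) = w holds for some w ∈ E. Then ‖G(t_n, z̃(n)) − w‖ ≤ L·C·(Δt)^p·(s_{m+1} − s_m). -/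
/-- Distillation-error lemma: on a sub-trajectory `[sm, sm1]` partitioned by `t 0 ≤ … ≤ t n`,
if the consistency function `G` is `L`-Lipschitz in the state, the solver local error is bounded
by `C * (t (i+1) - t i) * Δt ^ p`, self-consistency holds along consecutive partition points,
and the boundary condition `G (t 0) (ztil 0) = w` holds, then
`‖G (t n) (ztil n) - w‖ ≤ L * C * Δt ^ p * (sm1 - sm)`. -/
theorem distillation_error_lemma
    {E : Type*} [NormedAddCommGroup E] [NormedSpace ℝ E]
    (L C Δt : ℝ) (hL : 0 ≤ L) (hC : 0 ≤ C) (hΔt : 0 ≤ Δt) (p : ℕ)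
    (n : ℕ) (hn : 1 ≤ n) (sm sm1 : ℝ)
    (t : ℕ → ℝ) (ht0 : t 0 = sm) (htn : t n = sm1)
    (hmono : ∀ i < n, t i ≤ t (i + 1))
    (G : ℝ → E → E)
    (hLip : ∀ u : ℝ, ∀ x y : E, ‖G u x - G u y‖ ≤ L * ‖x - y‖)
    (ztil zhat : ℕ → E) (w : E)
    (hlocal : ∀ i < n, ‖zhat i - ztil i‖ ≤ C * (t (i + 1) - t i) * Δt ^ p)
    (hself : ∀ i < n, G (t (i + 1)) (ztil (i + 1)) = G (t i) (zhat i))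
    (hbd : G (t 0) (ztil 0) = w) :
    ‖G (t n) (ztil n) - w‖ ≤ L * C * Δt ^ p * (sm1 - sm) := by
  have key : ∀ k, k ≤ n →
      ‖G (t k) (ztil k) - G (t 0) (ztil 0)‖ ≤ L * C * Δt ^ p * (t k - t 0) := by
    intro k
    induction k with
    | zero => intro _; simp
    | succ k ih =>
      intro hk
      have hkn : k < n := hk
      have ih' := ih (le_of_lt hkn)
      calc ‖G (t (k+1)) (ztil (k+1)) - G (t 0) (ztil 0)‖
          ≤ ‖G (t (k+1)) (ztil (k+1)) - G (t k) (ztil k)‖ +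
            ‖G (t k) (ztil k) - G (t 0) (ztil 0)‖ := norm_sub_le_norm_sub_add_norm_sub _ _ _
        _ ≤ L * (C * (t (k+1) - t k) * Δt ^ p) + L * C * Δt ^ p * (t k - t 0) := by
            gcongr
            rw [hself k hkn]
            calc ‖G (t k) (zhat k) - G (t k) (ztil k)‖
                ≤ L * ‖zhat k - ztil k‖ := hLip _ _ _
              _ ≤ L * (C * (t (k+1) - t k) * Δt ^ p) :=
                  mul_le_mul_of_nonneg_left (hlocal k hkn) hL
        _ = L * C * Δt ^ p * (t (k+1) - t 0) := by ring
  have := key n le_rfl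
  rw [hbd, ht0, htn] at this
  rwa [htn]
end

section
/- Let E be a real normed vector space, let L, C, Δt ≥ 0 and α > 0, σ ∈ ℝ, and let ε, z_0, z_data ∈ E. Let n ≥ 1 and s_m = t_0 ≤ t_1 ≤ … ≤ t_n = s_{m+1} be a partition with t_{i+1} − t_i ≤ Δt for all i. Let G : ℝ → E → E be such that G(u, ·) is Lipschitz with constant L for every u, and let z̃ : {0,…,n} → E and ẑ : {0,…,n−1} → E satisfy, for every i < n: ‖ẑ(i) − z̃(i)‖ ≤ C·(t_{i+1} − t_i)·Δt and G(t_{i+1}, z̃(i+1)) = G(t_i, ẑ(i)). Assume the boundary condition G(t_0, z̃(0)) = α·z_data + σ·ε and the idealized optimality condition G(t_n, z̃(n)) = α·z_0 + σ·ε. Then ‖z_0 − z_data‖ ≤ (L·C·Δt·(s_{m+1} − s_m))/α. -/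
/-- Theorem 1 of the paper (tighter distillation error bound of SCTD): with a first-order
solver (`p = 1`), steps bounded by `Δt`, boundary condition `G (t 0) (ztil 0) = α • zdata + σ • ε`
and idealized optimality `G (t n) (ztil n) = α • z0 + σ • ε`, we get
`‖z0 - zdata‖ ≤ L * C * Δt * (sm1 - sm) / α`. -/
theorem sctd_distillation_error_bound
    {E : Type*} [NormedAddCommGroup E] [NormedSpace ℝ E]
    (L C Δt : ℝ) (hL : 0 ≤ L) (hC : 0 ≤ C) (hΔt : 0 ≤ Δt)
    (α : ℝ) (hα : 0 < α) (σ : ℝ) (ε z0 zdata : E)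
    (n : ℕ) (hn : 1 ≤ n) (sm sm1 : ℝ)
    (t : ℕ → ℝ) (ht0 : t 0 = sm) (htn : t n = sm1)
    (hmono : ∀ i < n, t i ≤ t (i + 1))
    (hstep : ∀ i < n, t (i + 1) - t i ≤ Δt)
    (G : ℝ → E → E)
    (hLip : ∀ u : ℝ, ∀ x y : E, ‖G u x - G u y‖ ≤ L * ‖x - y‖)
    (ztil zhat : ℕ → E)
    (hlocal : ∀ i < n, ‖zhat i - ztil i‖ ≤ C * (t (i + 1) - t i) * Δt)
    (hself : ∀ i < n, G (t (i + 1)) (ztil (i + 1)) = G (t i) (zhat i))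
    (hbd : G (t 0) (ztil 0) = α • zdata + σ • ε)
    (hopt : G (t n) (ztil n) = α • z0 + σ • ε) :
    ‖z0 - zdata‖ ≤ L * C * Δt * (sm1 - sm) / α := by
  have key : ∀ k, k ≤ n →
      ‖G (t k) (ztil k) - G (t 0) (ztil 0)‖ ≤ L * C * Δt * (t k - t 0) := by
    intro k
    induction k with
    | zero => intro _; simp
    | succ k ih =>
      intro hk
      have hk' : k < n := hk
      have hkle : k ≤ n := le_of_lt hk'
      have h1 : ‖G (t (k + 1)) (ztil (k + 1)) - G (t k) (ztil k)‖
          ≤ L * C * Δt * (t (k + 1) - t k) := by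
        rw [hself k hk']
        calc ‖G (t k) (zhat k) - G (t k) (ztil k)‖
            ≤ L * ‖zhat k - ztil k‖ := hLip _ _ _
          _ ≤ L * (C * (t (k + 1) - t k) * Δt) :=
              mul_le_mul_of_nonneg_left (hlocal k hk') hL
          _ = L * C * Δt * (t (k + 1) - t k) := by ring
      calc ‖G (t (k + 1)) (ztil (k + 1)) - G (t 0) (ztil 0)‖
          ≤ ‖G (t (k + 1)) (ztil (k + 1)) - G (t k) (ztil k)‖
            + ‖G (t k) (ztil k) - G (t 0) (ztil 0)‖ := norm_sub_le_norm_sub_add_norm_sub _ _ _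
        _ ≤ L * C * Δt * (t (k + 1) - t k) + L * C * Δt * (t k - t 0) :=
            add_le_add h1 (ih hkle)
        _ = L * C * Δt * (t (k + 1) - t 0) := by ring
  have hkey := key n le_rfl
  rw [hopt, hbd, ht0, htn] at hkey
  have heq : α • z0 + σ • ε - (α • zdata + σ • ε) = α • (z0 - zdata) := by
    rw [smul_sub]; abel
  rw [heq, norm_smul, Real.norm_eq_abs, abs_of_pos hα] at hkey
  rw [le_div_iff₀ hα]
  linarith [hkey]
end

section
/- Let E be a real normed vector space, let z_0, ε ∈ E, ω ∈ ℝ, and let α_t, σ_t, α_s, σ_s > 0 and s' ∈ ℝ with α_{s'}, σ_{s'} > 0 be noise-schedule values such that I_t := σ_t/α_t − σ_s/α_s ≠ 0; set I_{s'} := σ_{s'}/α_{s'} − σ_s/α_s. Let ε_c, ε_u : E × ℝ → E be arbitrary functions (conditional and unconditional noise predictors), and define the consistency functions G_c(z, u) = (α_s/α_u)·z − α_s·I_u·ε_c(z, u) and G_u(z, u) = (α_s/α_u)·z − α_s·I_u·ε_u(z, u) for u ∈ {t, s'}. Set z_t = α_t·z_0 + σ_t·ε, z_s = α_s·z_0 +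 σ_s·ε, and let ẑ ∈ E be arbitrary. Then ε_c(z_t, t) − ε + ω·(ε_c(z_t, t) − ε_u(z_t, t)) = (1/(α_s·I_t))·( G_c(ẑ, s') − G_c(z_t, t) + ω·(G_u(z_t, t) − G_c(z_t, t)) + z_s − G_c(ẑ, s') ). Consequently, for any weight w(t) ≥ 0, w(t)·‖ε_c(z_t,t) − ε + ω·(ε_c(z_t,t) − ε_u(z_t,t))‖² = b(t)·‖G_c(ẑ, s') − G_c(z_t, t) + ω·(G_u(z_t, t) − G_c(z_t, t)) + z_s − G_c(ẑ, s')‖² with b(t) = w(t)/(α_s·I_t)². -/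
/-- Equation (8) of the paper: the classifier-free-guided SDS noise residual equals
`1/(α_s·I_t)` times the sum of the self-consistency constraint, the (ω-scaled)
cross-consistency constraint, and the generative prior; consequently the weighted squared
norms agree with `b(t) = w(t)/(α_s·I_t)²`. -/
theorem sds_as_sctd
    {E : Type*} [NormedAddCommGroup E] [NormedSpace ℝ E]
    (z0 ε : E) (ω : ℝ) (t s' : ℝ)
    (αt σt αs σs αs' σs' : ℝ)
    (hαt : 0 < αt) (hσt : 0 < σt) (hαs : 0 < αs) (hσs : 0 < σs)
    (hαs' : 0 < αs') (hσs' : 0 < σs')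
    (It Is' : ℝ) (hIt : It = σt / αt - σs / αs) (hIt0 : It ≠ 0)
    (hIs' : Is' = σs' / αs' - σs / αs)
    (εc εu : E × ℝ → E)
    (Gc Gu : E → ℝ → E)
    (hGct : ∀ z : E, Gc z t = (αs / αt) • z - (αs * It) • εc (z, t))
    (hGcs' : ∀ z : E, Gc z s' = (αs / αs') • z - (αs * Is') • εc (z, s'))
    (hGut : ∀ z : E, Gu z t = (αs / αt) • z - (αs * It) • εu (z, t))
    (hGus' : ∀ z : E, Gu z s' = (αs / αs') • z - (αs * Is') • εu (z, s'))
    (zt zs : E) (hzt : zt = αt • z0 + σt • ε) (hzs : zs = αs • z0 + σs • ε)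
    (zhat : E) :
    εc (zt, t) - ε + ω • (εc (zt, t) - εu (zt, t)) =
      (1 / (αs * It)) •
        (Gc zhat s' - Gc zt t + ω • (Gu zt t - Gc zt t) + zs - Gc zhat s') ∧
    ∀ w : ℝ, 0 ≤ w →
      w * ‖εc (zt, t) - ε + ω • (εc (zt, t) - εu (zt, t))‖ ^ 2 =
        (w / (αs * It) ^ 2) *
          ‖Gc zhat s' - Gc zt t + ω • (Gu zt t - Gc zt t) + zs - Gc zhat s'‖ ^ 2 := by
  have hc0 : αs * It ≠ 0 := mul_ne_zero hαs.ne' hIt0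
  have hc : αs * It = (αs / αt) * σt - σs := by
    rw [hIt]; field_simp
  have ha : (αs / αt) * αt = αs := div_mul_cancel₀ _ hαt.ne'
  have key : Gc zhat s' - Gc zt t + ω • (Gu zt t - Gc zt t) + zs - Gc zhat s' =
      (αs * It) • (εc (zt, t) - ε + ω • (εc (zt, t) - εu (zt, t))) := by
    rw [hGct zt, hGut zt, hzs]
    rw [show zt = αt • z0 + σt • ε from hzt]
    rw [smul_add, smul_smul, smul_smul, ha, hc]
    module
  constructor
  · rw [key, smul_smul, one_div, inv_mul_cancel₀ hc0, one_smul]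
  · intro w hw
    rw [key, norm_smul, Real.norm_eq_abs, mul_pow, mul_pow, sq_abs]
    field_simp
end

section
/- Let E be a real normed vector space, let z_0, ε ∈ E, ω ∈ ℝ, and let α_t, σ_t, α_s, σ_s > 0 and s' ∈ ℝ with α_{s'}, σ_{s'} > 0 be noise-schedule values such that I_t := σ_t/α_t − σ_s/α_s ≠ 0; set I_{s'} := σ_{s'}/α_{s'} − σ_s/α_s. Let ε_c, ε_u : E × ℝ → E be arbitrary functions, and define G_c(z, u) = (α_s/α_u)·z − α_s·I_u·ε_c(z, u) and G_u(z, u) = (α_s/α_u)·z − α_s·I_u·ε_u(z, u) for u ∈ {t, s'}. Set z_t = α_t·z_0 + σ_t·ε, z_s = α_s·z_0 + σ_s·ε, and let ẑ ∈ E be arbitrary. Then ε_c(z_t, t) − ε + ω·(ε_c(z_t, t) − ε_u(z_t, t)) = (1/(α_s·I_t))·( G_u(ẑ, s') − G_u(z_t, t) + (ω+1)·(G_u(z_t, t) − G_c(z_t, t)) + z_s − G_u(ẑ, s') ). -/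
/-! Both sides are multiples of `αs * It`: the conditional and unconditional consistency functions
at `zt` differ by `αs * It` times the difference of the noise predictions, and the consistency
function fed the true noise `ε` maps the diffused sample `zt` exactly to `zs`, so
`zs - Gu zt t = (αs * It) • (εu (zt, t) - ε)`. The two `Gu zhat s'` terms cancel. -/

section ConsistencyFn

variable {E : Type*} [AddCommGroup E] [Module ℝ E]

/-- The paper's `G(z, u, ·)` for the sub-trajectory ending at `s`, with `I = σu/αu - σs/αs`. -/
noncomputable def consistencyFn (αs αu I : ℝ) (z e : E) : E :=
  (αs / αu) • z - (αs * I) • e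

theorem consistencyFn_sub_consistencyFn (αs αu I : ℝ) (z e₁ e₂ : E) :
    consistencyFn αs αu I z e₁ - consistencyFn αs αu I z e₂ = (αs * I) • (e₂ - e₁) := by
  rw [consistencyFn, consistencyFn, sub_sub_sub_cancel_left, smul_sub]

theorem consistencyFn_diffused_true_noise {αs σs αu σu : ℝ} (hαs : αs ≠ 0) (hαu : αu ≠ 0)
    (z0 ε : E) :
    consistencyFn αs αu (σu / αu - σs / αs) (αu • z0 + σu • ε) ε = αs • z0 + σs • ε := by
  rw [consistencyFn]
  match_scalars
  · field_simp
  · field_simp; ring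

theorem diffused_sub_consistencyFn {αs σs αu σu : ℝ} (hαs : αs ≠ 0) (hαu : αu ≠ 0)
    (z0 ε e : E) :
    αs • z0 + σs • ε - consistencyFn αs αu (σu / αu - σs / αs) (αu • z0 + σu • ε) e =
      (αs * (σu / αu - σs / αs)) • (e - ε) := by
  rw [← consistencyFn_diffused_true_noise hαs hαu z0 ε, consistencyFn_sub_consistencyFn]

end ConsistencyFn

theorem sds_as_sctd_efficient_general
    {E : Type*} [NormedAddCommGroup E] [NormedSpace ℝ E]
    (z0 ε : E) (ω : ℝ) (t s' : ℝ)
    (αt σt αs σs : ℝ)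
    (hαt : 0 < αt) (hαs : 0 < αs)
    (It : ℝ) (hIt : It = σt / αt - σs / αs) (hIt0 : It ≠ 0)
    (εc εu : E × ℝ → E)
    (Gc Gu : E → ℝ → E)
    (hGct : ∀ z : E, Gc z t = (αs / αt) • z - (αs * It) • εc (z, t))
    (hGut : ∀ z : E, Gu z t = (αs / αt) • z - (αs * It) • εu (z, t))
    (zt zs : E) (hzt : zt = αt • z0 + σt • ε) (hzs : zs = αs • z0 + σs • ε)
    (zhat : E) :
    εc (zt, t) - ε + ω • (εc (zt, t) - εu (zt, t)) =
      (1 / (αs * It)) •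
        (Gu zhat s' - Gu zt t + (ω + 1) • (Gu zt t - Gc zt t) + zs - Gu zhat s') := by
  have hGu : Gu zt t = consistencyFn αs αt It zt (εu (zt, t)) := hGut zt
  have hGc : Gc zt t = consistencyFn αs αt It zt (εc (zt, t)) := hGct zt
  have hcross : Gu zt t - Gc zt t = (αs * It) • (εc (zt, t) - εu (zt, t)) := by
    rw [hGu, hGc, consistencyFn_sub_consistencyFn]
  have hdata : zs - Gu zt t = (αs * It) • (εu (zt, t) - ε) := by
    rw [hGu, hzs, hzt, hIt, diffused_sub_consistencyFn hαs.ne' hαt.ne']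
  have hsum : Gu zhat s' - Gu zt t + (ω + 1) • (Gu zt t - Gc zt t) + zs - Gu zhat s' =
      (αs * It) • (εc (zt, t) - ε + ω • (εc (zt, t) - εu (zt, t))) := by
    calc _ = (zs - Gu zt t) + (ω + 1) • (Gu zt t - Gc zt t) := by abel
      _ = _ := by rw [hdata, hcross]; module
  rw [hsum, smul_smul, one_div_mul_cancel (mul_ne_zero hαs.ne' hIt0), one_smul]

/-- Equation (9) of the paper: computationally efficient equivalent transformation of the
SDS-as-SCTD identity, in which the condition appears only in the cross-consistency term. -/
theorem sds_as_sctd_efficient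
    {E : Type*} [NormedAddCommGroup E] [NormedSpace ℝ E]
    (z0 ε : E) (ω : ℝ) (t s' : ℝ)
    (αt σt αs σs αs' σs' : ℝ)
    (hαt : 0 < αt) (hσt : 0 < σt) (hαs : 0 < αs) (hσs : 0 < σs)
    (hαs' : 0 < αs') (hσs' : 0 < σs')
    (It Is' : ℝ) (hIt : It = σt / αt - σs / αs) (hIt0 : It ≠ 0)
    (hIs' : Is' = σs' / αs' - σs / αs)
    (εc εu : E × ℝ → E)
    (Gc Gu : E → ℝ → E)
    (hGct : ∀ z : E, Gc z t = (αs / αt) • z - (αs * It) • εc (z, t))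
    (hGcs' : ∀ z : E, Gc z s' = (αs / αs') • z - (αs * Is') • εc (z, s'))
    (hGut : ∀ z : E, Gu z t = (αs / αt) • z - (αs * It) • εu (z, t))
    (hGus' : ∀ z : E, Gu z s' = (αs / αs') • z - (αs * Is') • εu (z, s'))
    (zt zs : E) (hzt : zt = αt • z0 + σt • ε) (hzs : zs = αs • z0 + σs • ε)
    (zhat : E) :
    εc (zt, t) - ε + ω • (εc (zt, t) - εu (zt, t)) =
      (1 / (αs * It)) •
        (Gu zhat s' - Gu zt t + (ω + 1) • (Gu zt t - Gc zt t) + zs - Gu zhat s') :=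
  sds_as_sctd_efficient_general z0 ε ω t s' αt σt αs σs hαt hαs It hIt hIt0 εc εu Gc Gu hGct hGut zt
    zs hzt hzs zhat
end

section
/- Let E be a real normed vector space, let a < b be real numbers, let h : ℝ → E be continuous on [a, b], and let c ∈ E. Suppose that for every x ∈ [a, b), ∫_x^b e^{−λ}·h(λ) dλ = (∫_x^b e^{−λ} dλ)·c. Then h(λ) = c for every λ ∈ [a, b]. -/
open Topology


/-- If a continuous `h : [a, b] → E` satisfies
`∫_x^b e^{-λ} • h λ dλ = (∫_x^b e^{-λ} dλ) • c` for every lower endpoint `x ∈ [a, b)`,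
then `h` is constantly equal to `c` on `[a, b]`. -/
theorem weighted_average_constant_forces_constant
    {E : Type*} [NormedAddCommGroup E] [NormedSpace ℝ E] [CompleteSpace E]
    (a b : ℝ) (hab : a < b)
    (h : ℝ → E) (hh : ContinuousOn h (Set.Icc a b)) (c : E)
    (hint : ∀ x ∈ Set.Ico a b,
      (∫ l in x..b, Real.exp (-l) • h l) = (∫ l in x..b, Real.exp (-l)) • c) :
    ∀ l ∈ Set.Icc a b, h l = c := by
  set f : ℝ → E := fun l => Real.exp (-l) • (h l - c) with hfdef
  have hexp : Continuous fun l : ℝ => Real.exp (-l) := by continuity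
  have hfc : ContinuousOn f (Set.Icc a b) :=
    (hexp.continuousOn).smul (hh.sub continuousOn_const)
  -- G x := ∫ l in x..b, f l vanishes on Ico a b
  have hG0 : ∀ x ∈ Set.Ico a b, (∫ l in x..b, f l) = 0 := by
    intro x hx
    have hsub : Set.uIcc x b ⊆ Set.Icc a b := by
      rw [Set.uIcc_of_le hx.2.le]
      exact Set.Icc_subset_Icc hx.1 le_rfl
    have h1 : IntervalIntegrable (fun l => Real.exp (-l) • h l) MeasureTheory.volume x b :=
      (((hexp.continuousOn).smul hh).mono hsub).intervalIntegrable
    have h2 : IntervalIntegrable (fun l => Real.exp (-l) • c) MeasureTheory.volume x b :=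
      (hexp.smul continuous_const).intervalIntegrable x b
    have : (∫ l in x..b, f l)
        = (∫ l in x..b, Real.exp (-l) • h l) - ∫ l in x..b, Real.exp (-l) • c := by
      rw [← intervalIntegral.integral_sub h1 h2]
      congr 1
      ext l
      simp [hfdef, smul_sub]
    rw [this, hint x hx, intervalIntegral.integral_smul_const, sub_self]
  -- interior points
  have key : ∀ x ∈ Set.Ioo a b, h x = c := by
    intro x hx
    have hmem : Set.Ioo a b ∈ 𝓝 x := (isOpen_Ioo).mem_nhds hx
    have hcf : ContinuousAt f x :=
      (hfc.mono Set.Ioo_subset_Icc_self).continuousAt hmem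
    have hmeas : StronglyMeasurableAtFilter f (𝓝 x) :=
      (hfc.mono Set.Ioo_subset_Icc_self).stronglyMeasurableAtFilter isOpen_Ioo x hx
    have hsub : Set.uIcc x b ⊆ Set.Icc a b := by
      rw [Set.uIcc_of_le hx.2.le]
      exact Set.Icc_subset_Icc hx.1.le le_rfl
    have hii : IntervalIntegrable f MeasureTheory.volume x b :=
      (hfc.mono hsub).intervalIntegrable
    have hd : HasDerivAt (fun u => ∫ l in u..b, f l) (-f x) x :=
      intervalIntegral.integral_hasDerivAt_left hii hmeas hcf
    have hd0 : HasDerivAt (fun u => ∫ l in u..b, f l) 0 x := by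
      have heq : (fun u => ∫ l in u..b, f l) =ᶠ[𝓝 x] fun _ => (0 : E) := by
        filter_upwards [hmem] with u hu
        exact hG0 u (Set.Ioo_subset_Ico_self hu)
      exact (hasDerivAt_const x (0 : E)).congr_of_eventuallyEq heq
    have : -f x = 0 := hd.unique hd0
    have hfx : f x = 0 := by simpa using this
    have : Real.exp (-x) • (h x - c) = 0 := hfx
    have hne : Real.exp (-x) ≠ 0 := Real.exp_ne_zero _
    have := smul_eq_zero.mp this
    rcases this with h1 | h2
    · exact absurd h1 hne
    · exact sub_eq_zero.mp h2
  intro l hl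
  rcases eq_or_lt_of_le hl.1 with rfl | hal
  · -- l = a : use continuity from the right
    have hca : ContinuousWithinAt h (Set.Icc a b) a := hh a hl
    have hT : Filter.Tendsto h (𝓝[Set.Ioo a b] a) (𝓝 (h a)) :=
      hca.tendsto.mono_left (nhdsWithin_mono a Set.Ioo_subset_Icc_self)
    have hT' : Filter.Tendsto h (𝓝[Set.Ioo a b] a) (𝓝 c) := by
      apply Filter.Tendsto.congr' _ tendsto_const_nhds
      filter_upwards [self_mem_nhdsWithin] with u hu
      exact (key u hu).symm
    haveI : (𝓝[Set.Ioo a b] a).NeBot := by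
      apply IsGLB.nhdsWithin_neBot (isGLB_Ioo hab)
      exact Set.nonempty_Ioo.mpr hab
    exact tendsto_nhds_unique hT hT'
  rcases eq_or_lt_of_le hl.2 with rfl | hlb
  · -- l = b : continuity from the left
    have hcb : ContinuousWithinAt h (Set.Icc a l) l := hh l hl
    have hT : Filter.Tendsto h (𝓝[Set.Ioo a l] l) (𝓝 (h l)) :=
      hcb.tendsto.mono_left (nhdsWithin_mono l Set.Ioo_subset_Icc_self)
    have hT' : Filter.Tendsto h (𝓝[Set.Ioo a l] l) (𝓝 c) := by
      apply Filter.Tendsto.congr' _ tendsto_const_nhds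
      filter_upwards [self_mem_nhdsWithin] with u hu
      exact (key u hu).symm
    haveI : (𝓝[Set.Ioo a l] l).NeBot := by
      apply IsLUB.nhdsWithin_neBot (isLUB_Ioo hab)
      exact Set.nonempty_Ioo.mpr hab
    exact tendsto_nhds_unique hT hT'
  · exact key l ⟨hal, hlb⟩
end
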